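/- Duhamel-type bound for restricted dynamics: let H and H' be Hermitian n×n complex matrices, let O be any n×n complex matrix, and let τ ≥ 0. Then ‖e^{iHτ} O e^{−iHτ} − e^{iH'τ} O e^{−iH'τ}‖ ≤ ∫_0^τ ‖[e^{iHt} O e^{−iHt}, H − H']‖ dt, where [A,B] = AB − BA and ‖·‖ is the operator norm. -/

import Mathlib

open NormedSpace

namespace LVQC

lemma conj_norm_eq {A : Type*} [NormedRing A] [StarRing A] [CStarRing A]
    (h1 : ‖(1 : A)‖ ≤ 1) (U X : A) (hU : U * star U = 1) (hU' : star U * U = 1) :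
    ‖star U * X * U‖ = ‖X‖ := by
  have hUn : ‖U‖ ≤ 1 := by
    have h2 : ‖U‖ * ‖U‖ = ‖star U * U‖ := (CStarRing.norm_star_mul_self).symm
    rw [hU'] at h2
    nlinarith [norm_nonneg U]
  have hsUn : ‖star U‖ ≤ 1 := by rw [norm_star]; exact hUn
  have key : ∀ V Y : A, ‖V‖ ≤ 1 → ‖star V‖ ≤ 1 → ‖star V * Y * V‖ ≤ ‖Y‖ := by
    intro V Y h h'
    calc ‖star V * Y * V‖ ≤ ‖star V * Y‖ * ‖V‖ := norm_mul_le _ _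
      _ ≤ ‖star V‖ * ‖Y‖ * ‖V‖ := by
          have := norm_mul_le (star V) Y
          nlinarith [norm_nonneg V, norm_nonneg (star V * Y)]
      _ ≤ 1 * ‖Y‖ * 1 := by gcongr
      _ = ‖Y‖ := by ring
  apply le_antisymm (key U X hUn hsUn)
  have hXeq : X = star (star U) * (star U * X * U) * star U := by
    rw [star_star]
    have : U * (star U * X * U) * star U = (U * star U) * X * (U * star U) := by
      noncomm_ring
    rw [this, hU, one_mul, mul_one]
  calc ‖X‖ = ‖star (star U) * (star U * X * U) * star U‖ := by rw [← hXeq]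
    _ ≤ ‖star U * X * U‖ := key (star U) _ hsUn (by rw [star_star]; exact hUn)

lemma expinv {A : Type*} [NormedRing A] [NormedAlgebra ℝ A] [CompleteSpace A]
    (x : A) (t : ℝ) : exp (t • x) * exp (t • (-x)) = 1 := by
  rw [← exp_add_of_commute_of_mem_ball (𝕂 := ℝ) ((((Commute.refl x).neg_right).smul_left t).smul_right t)
      ((expSeries_radius_eq_top ℝ A).symm ▸ edist_lt_top _ _) ((expSeries_radius_eq_top ℝ A).symm ▸ edist_lt_top _ _),
    smul_neg, add_neg_cancel, exp_zero]

lemma duhamel_abstract {A : Type*} [NormedRing A] [StarRing A] [CStarRing A]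
    [NormedAlgebra ℝ A] [CompleteSpace A]
    (h1 : ‖(1 : A)‖ ≤ 1) (b b' c : A)
    (hstar : ∀ t : ℝ, star (exp (t • b')) = exp (t • (-b')))
    (τ : ℝ) (hτ : 0 ≤ τ) :
    ‖exp (τ • b) * c * exp (τ • (-b)) - exp (τ • b') * c * exp (τ • (-b'))‖
      ≤ ∫ t in (0:ℝ)..τ,
          ‖(exp (t • b) * c * exp (t • (-b))) * (b - b')
            - (b - b') * (exp (t • b) * c * exp (t • (-b)))‖ := by
  -- notation
  set P : ℝ → A := fun t => exp (t • b) with hPdef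
  set Pm : ℝ → A := fun t => exp (t • (-b)) with hPmdef
  set R : ℝ → A := fun t => exp (t • b') with hRdef
  set Rm : ℝ → A := fun t => exp (t • (-b')) with hRmdef
  set G : ℝ → A := fun t => Rm t * (P t * c * Pm t) * R t with hGdef
  set G' : ℝ → A := fun t =>
    Rm t * ((b - b') * (P t * c * Pm t) - (P t * c * Pm t) * (b - b')) * R t with hG'def
  have hcb : ∀ t : ℝ, b * P t = P t * b := fun t =>
    (((Commute.refl b).smul_right t).exp_right).eq
  have hcb' : ∀ t : ℝ, b' * R t = R t * b' := fun t =>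
    (((Commute.refl b').smul_right t).exp_right).eq
  -- derivative of G
  have hGd : ∀ t : ℝ, HasDerivAt G (G' t) t := by
    intro t
    have h1d : HasDerivAt P (P t * b) t := hasDerivAt_exp_smul_const b t
    have h2d : HasDerivAt Pm (Pm t * (-b)) t := hasDerivAt_exp_smul_const (-b) t
    have h3d : HasDerivAt R (R t * b') t := hasDerivAt_exp_smul_const b' t
    have h4d : HasDerivAt Rm (Rm t * (-b')) t := hasDerivAt_exp_smul_const (-b') t
    have h := (h4d.mul ((h1d.mul_const c).mul h2d)).mul h3d
    convert h using 1
    · rfl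
    rw [hG'def]
    rw [← hcb t, ← hcb' t]
    simp only [Pi.mul_apply]
    noncomm_ring
  -- continuity of G'
  have hcexp : ∀ x : A, Continuous (fun t : ℝ => exp (t • x)) := fun x =>
    continuous_iff_continuousAt.2 fun t => (hasDerivAt_exp_smul_const x t).continuousAt
  have hAcont : Continuous (fun t => P t * c * Pm t) :=
    (((hcexp b).mul continuous_const).mul (hcexp (-b)))
  have hG'cont : Continuous G' :=
    ((hcexp (-b')).mul ((continuous_const.mul hAcont).sub (hAcont.mul continuous_const))).mul
      (hcexp b')
  -- FTC
  have hsub : G τ - G 0 = ∫ t in (0:ℝ)..τ, G' t :=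
    (intervalIntegral.integral_eq_sub_of_hasDerivAt (fun t _ => hGd t)
      (hG'cont.intervalIntegrable _ _)).symm
  -- unitarity facts
  have hUnit : ∀ t : ℝ, R t * Rm t = 1 := fun t => expinv b' t
  have hUnit' : ∀ t : ℝ, Rm t * R t = 1 := by
    intro t
    have := expinv (-b') t
    rwa [neg_neg] at this
  have hstar' : ∀ t : ℝ, star (R t) = Rm t := fun t => hstar t
  have hConj : ∀ X : A, ∀ t : ℝ, ‖Rm t * X * R t‖ = ‖X‖ := by
    intro X t
    have h := conj_norm_eq h1 (R t) X (by rw [hstar' t]; exact hUnit t)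
      (by rw [hstar' t]; exact hUnit' t)
    rwa [hstar' t] at h
  -- LHS equals ‖G τ - G 0‖
  have hG0 : G 0 = c := by
    simp [hGdef, hPdef, hPmdef, hRdef, hRmdef, zero_smul, exp_zero]
  have hLHS : ‖P τ * c * Pm τ - R τ * c * Rm τ‖ = ‖G τ - G 0‖ := by
    rw [← hConj (P τ * c * Pm τ - R τ * c * Rm τ) τ, hG0]
    congr 1
    have e1 : Rm τ * (R τ * c * Rm τ) * R τ = (Rm τ * R τ) * c * (Rm τ * R τ) := by
      noncomm_ring
    rw [mul_sub, sub_mul, e1, hUnit' τ, one_mul, mul_one, hGdef]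
  rw [hLHS, hsub]
  calc ‖∫ t in (0:ℝ)..τ, G' t‖ ≤ ∫ t in (0:ℝ)..τ, ‖G' t‖ :=
        intervalIntegral.norm_integral_le_integral_norm hτ
    _ = _ := by
        apply intervalIntegral.integral_congr
        intro t _
        show ‖G' t‖ = _
        rw [hG'def]
        simp only
        rw [hConj]
        rw [← norm_neg, neg_sub]


attribute [local instance] Matrix.linftyOpNormedRing Matrix.linftyOpNormedAlgebra in
lemma map_exp_euclidean {n : ℕ} (M : Matrix (Fin n) (Fin n) ℂ) :
    Matrix.toEuclideanCLM (𝕜 := ℂ) (exp M) = exp (Matrix.toEuclideanCLM (𝕜 := ℂ) M) := by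
  have hcont : Continuous (Matrix.toEuclideanCLM (𝕜 := ℂ) (n := Fin n)) :=
    LinearMap.continuous_of_finiteDimensional
      ({ toFun := Matrix.toEuclideanCLM (𝕜 := ℂ) (n := Fin n),
         map_add' := fun x y => map_add _ x y,
         map_smul' := fun r x => map_smul _ r x } :
        Matrix (Fin n) (Fin n) ℂ →ₗ[ℂ] (EuclideanSpace ℂ (Fin n) →L[ℂ] EuclideanSpace ℂ (Fin n)))
  exact map_exp_of_mem_ball (𝕂 := ℂ) _ hcont M ((expSeries_radius_eq_top ℂ (Matrix (Fin n) (Fin n) ℂ)).symm ▸ edist_lt_top _ _)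


/-- The operator norm (spectral norm) of a matrix. -/
noncomputable def opNorm {n : Type*} [Fintype n] [DecidableEq n] (M : Matrix n n ℂ) : ℝ :=
  ‖Matrix.toEuclideanCLM (𝕜 := ℂ) M‖

set_option maxHeartbeats 2000000 in
set_option synthInstance.maxHeartbeats 400000 in
/-- **Duhamel-type bound.** For Hermitian `H`, `H'`, any matrix `O`, and
`τ ≥ 0`, `‖e^{iHτ} O e^{−iHτ} − e^{iH'τ} O e^{−iH'τ}‖ ≤ ∫_0^τ ‖[e^{iHt} O e^{−iHt}, H − H']‖ dt`. -/
theorem duhamel_restricted_dynamics (n : ℕ) (H H' O : Matrix (Fin n) (Fin n) ℂ)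
    (hH : H.IsHermitian) (hH' : H'.IsHermitian) (τ : ℝ) (hτ : 0 ≤ τ) :
    opNorm (NormedSpace.exp ((Complex.I * (τ : ℂ)) • H) * O *
          NormedSpace.exp ((-(Complex.I * (τ : ℂ))) • H)
        - NormedSpace.exp ((Complex.I * (τ : ℂ)) • H') * O *
          NormedSpace.exp ((-(Complex.I * (τ : ℂ))) • H'))
      ≤ ∫ t in (0 : ℝ)..τ,
          opNorm ((NormedSpace.exp ((Complex.I * (t : ℂ)) • H) * O *
                NormedSpace.exp ((-(Complex.I * (t : ℂ))) • H)) * (H - H')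
            - (H - H') * (NormedSpace.exp ((Complex.I * (t : ℂ)) • H) * O *
                NormedSpace.exp ((-(Complex.I * (t : ℂ))) • H))) := by
  set f := Matrix.toEuclideanCLM (𝕜 := ℂ) (n := Fin n) with hfdef
  have hexp : ∀ M : Matrix (Fin n) (Fin n) ℂ, f (exp M) = exp (f M) := by
    intro M
    rw [hfdef, map_exp_euclidean M]
  have hsm : ∀ (t : ℝ) (M : Matrix (Fin n) (Fin n) ℂ),
      f ((Complex.I * (t : ℂ)) • M) = t • (Complex.I • f M) := by
    intro t M
    rw [map_smul, mul_comm, mul_smul, ← Complex.coe_algebraMap]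
    exact algebraMap_smul ℂ t (Complex.I • f M)
  have hsm' : ∀ (t : ℝ) (M : Matrix (Fin n) (Fin n) ℂ),
      f ((-(Complex.I * (t : ℂ))) • M) = t • (-(Complex.I • f M)) := by
    intro t M
    rw [neg_smul, map_neg, hsm, smul_neg]
  set b : EuclideanSpace ℂ (Fin n) →L[ℂ] EuclideanSpace ℂ (Fin n) := Complex.I • f H with hbdef
  set b' : EuclideanSpace ℂ (Fin n) →L[ℂ] EuclideanSpace ℂ (Fin n) := Complex.I • f H' with hb'def
  -- link between the matrix exponentials and exponentials of b, b'
  have hlk : ∀ (t : ℝ) (M : Matrix (Fin n) (Fin n) ℂ),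
      f (exp ((Complex.I * (t : ℂ)) • M)) = exp (t • (Complex.I • f M)) := by
    intro t M; rw [hexp, hsm]
  have hlk' : ∀ (t : ℝ) (M : Matrix (Fin n) (Fin n) ℂ),
      f (exp ((-(Complex.I * (t : ℂ))) • M)) = exp (t • (-(Complex.I • f M))) := by
    intro t M; rw [hexp, hsm']
  -- star fact
  have hstar : ∀ t : ℝ, star (exp (t • b')) = exp (t • (-b')) := by
    intro t
    rw [hb'def, ← hlk t H', ← hlk' t H', ← map_star]
    congr 1
    rw [Matrix.star_eq_conjTranspose, ← Matrix.exp_conjTranspose]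
    congr 1
    rw [Matrix.conjTranspose_smul, hH'.eq]
    congr 1
    simp [Complex.conj_ofReal]
  have h1 : ‖(1 : EuclideanSpace ℂ (Fin n) →L[ℂ] EuclideanSpace ℂ (Fin n))‖ ≤ 1 := by
    rw [ContinuousLinearMap.one_def]
    exact ContinuousLinearMap.norm_id_le
  have main := duhamel_abstract h1 b b' (f O) hstar τ hτ
  have hW : ∀ t : ℝ,
      f (exp ((Complex.I * (t : ℂ)) • H) * O * exp ((-(Complex.I * (t : ℂ))) • H))
        = exp (t • b) * f O * exp (t • (-b)) := by
    intro t
    rw [map_mul, map_mul, hlk t H, hlk' t H, hbdef]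
  have hW' : ∀ t : ℝ,
      f (exp ((Complex.I * (t : ℂ)) • H') * O * exp ((-(Complex.I * (t : ℂ))) • H'))
        = exp (t • b') * f O * exp (t • (-b')) := by
    intro t
    rw [map_mul, map_mul, hlk t H', hlk' t H', hb'def]
  have hbd : b - b' = Complex.I • (f H - f H') := by
    rw [hbdef, hb'def, smul_sub]
  have eq1 : opNorm (exp ((Complex.I * (τ : ℂ)) • H) * O * exp ((-(Complex.I * (τ : ℂ))) • H)
        - exp ((Complex.I * (τ : ℂ)) • H') * O * exp ((-(Complex.I * (τ : ℂ))) • H'))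
      = ‖exp (τ • b) * f O * exp (τ • (-b)) - exp (τ • b') * f O * exp (τ • (-b'))‖ := by
    show ‖f _‖ = _
    rw [map_sub, hW τ, hW' τ]
  rw [eq1]
  refine main.trans (le_of_eq ?_)
  apply intervalIntegral.integral_congr
  intro t _
  show ‖exp (t • b) * f O * exp (t • (-b)) * (b - b')
      - (b - b') * (exp (t • b) * f O * exp (t • (-b)))‖ = ‖f _‖
  rw [map_sub, map_mul f _ (H - H'), map_mul f (H - H') _, hW t, map_sub, hbd,
    mul_smul_comm, smul_mul_assoc]
  have hXY : ∀ X Y : EuclideanSpace ℂ (Fin n) →L[ℂ] EuclideanSpace ℂ (Fin n),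
      ‖Complex.I • X - Complex.I • Y‖ = ‖X - Y‖ := by
    intro X Y
    rw [show Complex.I • X - Complex.I • Y = Complex.I • (X - Y) from (smul_sub _ _ _).symm]
    exact (norm_smul Complex.I (X - Y)).trans (by rw [Complex.norm_I, one_mul])
  exact hXY _ _

end LVQC
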